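/- Let A be an n×n real symmetric matrix, 1 ≤ p < q ≤ n, and let G = G(p,q,θ) be a Givens rotation such that B = Gᵀ A G satisfies B_{pq} = B_{qp} = 0. Then B_{pp}² + B_{qq}² = a_{pp}² + a_{qq}² + 2 a_{pq}². -/
import Mathlib


open Matrix

/-- The Givens rotation `G(p, q, θ)`: the identity matrix except that
`G p p = G q q = cos θ`, `G p q = sin θ` and `G q p = -sin θ`. -/
noncomputable def givens (n : ℕ) (p q : Fin n) (θ : ℝ) : Matrix (Fin n) (Fin n) ℝ :=
  Matrix.of fun r t =>
    if r = p ∧ t = p then Real.cos θ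
    else if r = q ∧ t = q then Real.cos θ
    else if r = p ∧ t = q then Real.sin θ
    else if r = q ∧ t = p then -Real.sin θ
    else if r = t then 1 else 0

lemma givens_col_p {n : ℕ} {p q : Fin n} (hne : p ≠ q) (θ : ℝ) (j : Fin n) :
    givens n p q θ j p =
      if j = p then Real.cos θ else if j = q then -Real.sin θ else 0 := by
  simp only [givens, Matrix.of_apply]
  by_cases hjp : j = p <;> by_cases hjq : j = q <;>
    simp_all [hne, hne.symm]

lemma givens_col_q {n : ℕ} {p q : Fin n} (hne : p ≠ q) (θ : ℝ) (j : Fin n) :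
    givens n p q θ j q =
      if j = p then Real.sin θ else if j = q then Real.cos θ else 0 := by
  simp only [givens, Matrix.of_apply]
  by_cases hjp : j = p <;> by_cases hjq : j = q <;>
    simp_all [hne, hne.symm]

lemma mul_givens_p {n : ℕ} {p q : Fin n} (hne : p ≠ q) (θ : ℝ)
    (M : Matrix (Fin n) (Fin n) ℝ) (r : Fin n) :
    (M * givens n p q θ) r p = Real.cos θ * M r p - Real.sin θ * M r q := by
  rw [Matrix.mul_apply]
  have : ∀ j, M r j * givens n p q θ j p =
      (if j = p then Real.cos θ * M r p else 0) +
      (if j = q then -(Real.sin θ * M r q) else 0) := by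
    intro j
    rw [givens_col_p hne]
    by_cases hjp : j = p <;> by_cases hjq : j = q <;> simp_all [hne] <;> ring
  simp only [this, Finset.sum_add_distrib, Finset.sum_ite_eq', Finset.mem_univ, if_true]
  ring

lemma mul_givens_q {n : ℕ} {p q : Fin n} (hne : p ≠ q) (θ : ℝ)
    (M : Matrix (Fin n) (Fin n) ℝ) (r : Fin n) :
    (M * givens n p q θ) r q = Real.sin θ * M r p + Real.cos θ * M r q := by
  rw [Matrix.mul_apply]
  have : ∀ j, M r j * givens n p q θ j q =
      (if j = p then Real.sin θ * M r p else 0) +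
      (if j = q then Real.cos θ * M r q else 0) := by
    intro j
    rw [givens_col_q hne]
    by_cases hjp : j = p <;> by_cases hjq : j = q <;> simp_all [hne] <;> ring
  simp only [this, Finset.sum_add_distrib, Finset.sum_ite_eq', Finset.mem_univ, if_true]

lemma givensT_mul_p {n : ℕ} {p q : Fin n} (hne : p ≠ q) (θ : ℝ)
    (M : Matrix (Fin n) (Fin n) ℝ) (t : Fin n) :
    ((givens n p q θ)ᵀ * M) p t = Real.cos θ * M p t - Real.sin θ * M q t := by
  rw [Matrix.mul_apply]
  have : ∀ i, (givens n p q θ)ᵀ p i * M i t =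
      (if i = p then Real.cos θ * M p t else 0) +
      (if i = q then -(Real.sin θ * M q t) else 0) := by
    intro i
    rw [Matrix.transpose_apply, givens_col_p hne]
    by_cases hip : i = p <;> by_cases hiq : i = q <;> simp_all [hne] <;> ring
  simp only [this, Finset.sum_add_distrib, Finset.sum_ite_eq', Finset.mem_univ, if_true]
  ring

lemma givensT_mul_q {n : ℕ} {p q : Fin n} (hne : p ≠ q) (θ : ℝ)
    (M : Matrix (Fin n) (Fin n) ℝ) (t : Fin n) :
    ((givens n p q θ)ᵀ * M) q t = Real.sin θ * M p t + Real.cos θ * M q t := by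
  rw [Matrix.mul_apply]
  have : ∀ i, (givens n p q θ)ᵀ q i * M i t =
      (if i = p then Real.sin θ * M p t else 0) +
      (if i = q then Real.cos θ * M q t else 0) := by
    intro i
    rw [Matrix.transpose_apply, givens_col_q hne]
    by_cases hip : i = p <;> by_cases hiq : i = q <;> simp_all [hne] <;> ring
  simp only [this, Finset.sum_add_distrib, Finset.sum_ite_eq', Finset.mem_univ, if_true]

/-- If a Givens rotation annihilates the `(p,q)` and `(q,p)` entries of a symmetric matrix `A`,
then `B_{pp}² + B_{qq}² = a_{pp}² + a_{qq}² + 2 a_{pq}²`. -/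
theorem diag_sq_sum_givens_update {n : ℕ}
    (A : Matrix (Fin n) (Fin n) ℝ) (hA : A.IsSymm)
    (p q : Fin n) (hpq : p < q) (θ : ℝ)
    (B : Matrix (Fin n) (Fin n) ℝ)
    (hB : B = (givens n p q θ)ᵀ * A * givens n p q θ)
    (hBpq : B p q = 0) (hBqp : B q p = 0) :
    (B p p) ^ 2 + (B q q) ^ 2 = (A p p) ^ 2 + (A q q) ^ 2 + 2 * (A p q) ^ 2 := by
  have hne : p ≠ q := hpq.ne
  have hsym : A q p = A p q := by
    have := congrFun (congrFun hA q) p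
    simpa [Matrix.transpose_apply] using this.symm
  have hcs : Real.cos θ ^ 2 + Real.sin θ ^ 2 = 1 := Real.cos_sq_add_sin_sq θ
  have hBpp : B p p = Real.cos θ * (Real.cos θ * A p p - Real.sin θ * A p q)
      - Real.sin θ * (Real.cos θ * A p q - Real.sin θ * A q q) := by
    rw [hB, Matrix.mul_assoc, givensT_mul_p hne, mul_givens_p hne, mul_givens_p hne, hsym]
  have hBqq : B q q = Real.sin θ * (Real.sin θ * A p p + Real.cos θ * A p q)
      + Real.cos θ * (Real.sin θ * A p q + Real.cos θ * A q q) := by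
    rw [hB, Matrix.mul_assoc, givensT_mul_q hne, mul_givens_q hne, mul_givens_q hne, hsym]
  have hBpq' : Real.cos θ * (Real.sin θ * A p p + Real.cos θ * A p q)
      - Real.sin θ * (Real.sin θ * A p q + Real.cos θ * A q q) = 0 := by
    rw [← hBpq, hB, Matrix.mul_assoc, givensT_mul_p hne, mul_givens_q hne, mul_givens_q hne, hsym]
  have hBqp' : Real.sin θ * (Real.cos θ * A p p - Real.sin θ * A p q)
      + Real.cos θ * (Real.cos θ * A p q - Real.sin θ * A q q) = 0 := by
    rw [← hBqp, hB, Matrix.mul_assoc, givensT_mul_q hne, mul_givens_p hne, mul_givens_p hne, hsym]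
  have htr : B p p + B q q = A p p + A q q := by
    rw [hBpp, hBqq]
    linear_combination (A p p + A q q) * hcs
  have hdet : B p p * B q q = A p p * A q q - A p q ^ 2 := by
    rw [hBpp, hBqq]
    linear_combination (Real.cos θ * (Real.sin θ * A p p + Real.cos θ * A p q)
        - Real.sin θ * (Real.sin θ * A p q + Real.cos θ * A q q)) * hBqp'
      + (A p p * A q q - A p q ^ 2) * (Real.cos θ ^ 2 + Real.sin θ ^ 2 + 1) * hcs
  linear_combination (B p p + B q q + A p p + A q q) * htr - 2 * hdet
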